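/- Consider the single-item all-pay auction with parameters (B_1, B_2, v_1, v_2) with B_1 ≠ B_2; let s be the player with the larger budget, w the other player, and L = min{B_1, B_2, v_1, v_2}. If v_s > L, then the following profile of mixed strategies is a Nash equilibrium: player s's strategy is the probability measure on [0, L] whose cumulative distribution function is F_s(x) = x/v_w for x ∈ [0, L) with an atom of mass 1 − L/v_w at L; player w's strategy is the probability measure on [0, L] with an atom of mass (v_s − L)/v_s at 0 and cumulative distribution function F_w(x) = (v_s − L + x)/v_s for x ∈ (0, L]. -/

import Mathlib

open MeasureTheory Set

noncomputable section

/-- `L = min {B₁, B₂, v₁, v₂}` for the single-item auction. -/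
def Lval (B v : Fin 2 → ℝ) : ℝ := min (min (B 0) (B 1)) (min (v 0) (v 1))

/-- Probability that player `i` wins the single item when bidding `xi` while the
opponent bids `xo`: the strictly higher bid wins; on a tie at
`min {B₁, B₂, v₁, v₂}` the player with the strictly larger `min {Bᵢ, vᵢ}` wins,
and all other ties are resolved by a fair coin. -/
def winProb (B v : Fin 2 → ℝ) (i : Fin 2) (xi xo : ℝ) : ℝ :=
  if xo < xi then 1
  else if xi < xo then 0
  else if xi = Lval B v ∧ min (B (1 - i)) (v (1 - i)) < min (B i) (v i) then 1
  else if xi = Lval B v ∧ min (B i) (v i) < min (B (1 - i)) (v (1 - i)) then 0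
  else 1 / 2

/-- Expected utility of player `i` from the pure bids `xi` (own) and `xo` (opponent):
he pays his bid in any case and receives `v i` with his winning probability. -/
def payoff (B v : Fin 2 → ℝ) (i : Fin 2) (xi xo : ℝ) : ℝ :=
  winProb B v i xi xo * v i - xi

/-- A mixed strategy of a player with budget `Bi`: a probability measure on `[0, Bi]`. -/
def IsStrategy (Bi : ℝ) (μ : Measure ℝ) : Prop :=
  IsProbabilityMeasure μ ∧ μ (Icc 0 Bi) = 1

/-- Expected utility of player `i` when he plays `μ` and the opponent plays `ν`. -/
def expUtil (B v : Fin 2 → ℝ) (i : Fin 2) (μ ν : Measure ℝ) : ℝ :=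
  ∫ xi, (∫ xo, payoff B v i xi xo ∂ν) ∂μ

/-- `(F 0, F 1)` is a (mixed) Nash equilibrium of the single-item all-pay auction. -/
def IsNash (B v : Fin 2 → ℝ) (F : Fin 2 → Measure ℝ) : Prop :=
  (∀ i, IsStrategy (B i) (F i)) ∧
  ∀ i, ∀ μ, IsStrategy (B i) μ →
    expUtil B v i μ (F (1 - i)) ≤ expUtil B v i (F i) (F (1 - i))

/-- The (topological) support of a mixed strategy. -/
def supp (μ : Measure ℝ) : Set ℝ := {x | ∀ U ∈ nhds x, μ U ≠ 0}

/-!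
Each strategy makes the opponent indifferent on its own support. Against `F_w`, every bid
`x ∈ (0, L]` of the strong player earns `v_s - L` and no affordable bid earns more. Against
`F_s`, every bid `x ∈ [0, L]` of the weak player earns `0`, and a bid above `L` is affordable
only when `L = v_w`, where it earns `v_w - x < 0`. Since `F_s` is carried by `(0, L]` (by `{0}`
when `L = 0`) and `F_w` by `[0, L]`, neither player gains by deviating. The tie rule at `L`
favours the strong player, which is what makes the atoms at `L` (and the bid `0` when `L = 0`)
work.
-/

lemma fin_two_eq_or_eq_one_sub (i s : Fin 2) : i = s ∨ i = 1 - s := by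
  fin_cases i <;> fin_cases s <;> decide

lemma fin_two_one_sub_ne (s : Fin 2) : 1 - s ≠ s := by
  fin_cases s <;> decide

section Lval

variable {B v : Fin 2 → ℝ}

lemma Lval_le_B (j : Fin 2) : Lval B v ≤ B j := by
  fin_cases j
  · exact (min_le_left _ _).trans (min_le_left _ _)
  · exact (min_le_left _ _).trans (min_le_right _ _)

lemma Lval_le_v (j : Fin 2) : Lval B v ≤ v j := by
  fin_cases j
  · exact (min_le_right _ _).trans (min_le_left _ _)
  · exact (min_le_right _ _).trans (min_le_right _ _)

lemma Lval_nonneg (hB : ∀ i, 0 ≤ B i) (hv : ∀ i, 0 < v i) : 0 ≤ Lval B v :=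
  le_min (le_min (hB 0) (hB 1)) (le_min (hv 0).le (hv 1).le)

lemma Lval_lt_min {s : Fin 2} (hs : B (1 - s) < B s) (hvs : Lval B v < v s) :
    Lval B v < min (B s) (v s) :=
  lt_min ((Lval_le_B _).trans_lt hs) hvs

lemma min_eq_Lval {s : Fin 2} (hs : B (1 - s) < B s) (hvs : Lval B v < v s) :
    min (B (1 - s)) (v (1 - s)) = Lval B v := by
  obtain rfl | rfl : s = 0 ∨ s = 1 := by fin_cases s <;> simp
  all_goals simp only [Lval, min_def, sub_zero, sub_self] at *; split_ifs at * <;> linarith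

end Lval

section Payoff

variable (B v : Fin 2 → ℝ) (i : Fin 2) {x y : ℝ}

lemma winProb_mem_Icc : winProb B v i x y ∈ Icc 0 1 := by
  unfold winProb; split_ifs <;> norm_num

lemma payoff_of_lt (h : y < x) : payoff B v i x y = v i - x := by
  simp [payoff, winProb, h]

lemma payoff_of_gt (h : x < y) : payoff B v i x y = -x := by
  simp [payoff, winProb, h, h.not_gt]

lemma payoff_le (hv : 0 ≤ v i) : payoff B v i x y ≤ v i - x := by
  have := (winProb_mem_Icc B v i (x := x) (y := y)).2
  unfold payoff
  nlinarith

lemma payoff_Lval_Lval (h : min (B (1 - i)) (v (1 - i)) < min (B i) (v i)) :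
    payoff B v i (Lval B v) (Lval B v) = v i - Lval B v := by
  simp [payoff, winProb, h]

lemma payoff_Lval_eq_neg (hx : x ≤ Lval B v)
    (h : min (B i) (v i) < min (B (1 - i)) (v (1 - i))) :
    payoff B v i x (Lval B v) = -x := by
  rcases hx.lt_or_eq with hx | rfl
  · exact payoff_of_gt B v i hx
  · simp [payoff, winProb, h, h.not_gt]

lemma measurable_payoff : Measurable (payoff B v i x) := by
  unfold payoff winProb
  refine (Measurable.mul_const ?_ _).sub_const _
  exact Measurable.ite measurableSet_Iio measurable_const
    (Measurable.ite measurableSet_Ioi measurable_const measurable_const)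

lemma integrable_payoff (μ : Measure ℝ) [IsFiniteMeasure μ] : Integrable (payoff B v i x) μ := by
  refine .of_bound (measurable_payoff B v i).aestronglyMeasurable (|v i| + |x|)
    (.of_forall fun y => ?_)
  obtain ⟨h0, h1⟩ := winProb_mem_Icc B v i (x := x) (y := y)
  calc ‖payoff B v i x y‖ ≤ |winProb B v i x y| * |v i| + |x| := by
        rw [Real.norm_eq_abs, payoff, ← abs_mul]; exact abs_sub _ _
    _ ≤ |v i| + |x| := by
        gcongr; exact mul_le_of_le_one_left (abs_nonneg _) (abs_le.2 ⟨by linarith, h1⟩)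

end Payoff

lemma setIntegral_Ioc_eq_of_eqOn_Ioo {f : ℝ → ℝ} {a b c : ℝ} (hab : a ≤ b)
    (hf : EqOn f (fun _ => c) (Ioo a b)) : ∫ y in Ioc a b, f y = (b - a) * c := by
  rw [integral_Ioc_eq_integral_Ioo, setIntegral_congr_fun measurableSet_Ioo hf, setIntegral_const,
    Real.volume_real_Ioo_of_le hab, smul_eq_mul]

lemma integral_ofReal_smul_add {α : Type*} [MeasurableSpace α] {f : α → ℝ} {μ ν : Measure α}
    {c d : ℝ} (hc : 0 ≤ c) (hd : 0 ≤ d) (hμ : Integrable f μ) (hν : Integrable f ν) :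
    ∫ y, f y ∂(ENNReal.ofReal c • μ + ENNReal.ofReal d • ν) = c * ∫ y, f y ∂μ + d * ∫ y, f y ∂ν := by
  rw [integral_add_measure (hμ.smul_measure ENNReal.ofReal_ne_top)
      (hν.smul_measure ENNReal.ofReal_ne_top), integral_smul_measure, integral_smul_measure,
    ENNReal.toReal_ofReal hc, ENNReal.toReal_ofReal hd, smul_eq_mul, smul_eq_mul]

section PayoffIntegral

variable (B v : Fin 2 → ℝ) (i : Fin 2) {x a b : ℝ}

lemma setIntegral_payoff_Ioc_of_mem (hax : a ≤ x) (hxb : x ≤ b) :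
    ∫ y in Ioc a b, payoff B v i x y = (x - a) * v i - (b - a) * x := by
  rw [← Ioc_union_Ioc_eq_Ioc hax hxb, setIntegral_union (Ioc_disjoint_Ioc_of_le le_rfl)
      measurableSet_Ioc (integrable_payoff B v i _) (integrable_payoff B v i _),
    setIntegral_Ioc_eq_of_eqOn_Ioo hax fun y hy => payoff_of_lt B v i hy.2,
    setIntegral_Ioc_eq_of_eqOn_Ioo hxb fun y hy => payoff_of_gt B v i hy.1]
  ring

lemma setIntegral_payoff_Ioc_of_le (hab : a ≤ b) (hbx : b ≤ x) :
    ∫ y in Ioc a b, payoff B v i x y = (b - a) * (v i - x) :=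
  setIntegral_Ioc_eq_of_eqOn_Ioo hab fun _ hy => payoff_of_lt B v i (hy.2.trans_le hbx)

lemma setIntegral_payoff_Ico_of_mem (hax : a ≤ x) (hxb : x ≤ b) :
    ∫ y in Ico a b, payoff B v i x y = (x - a) * v i - (b - a) * x := by
  rw [integral_Ico_eq_integral_Ioo, ← integral_Ioc_eq_integral_Ioo,
    setIntegral_payoff_Ioc_of_mem B v i hax hxb]

lemma setIntegral_payoff_Ico_of_le (hab : a ≤ b) (hbx : b ≤ x) :
    ∫ y in Ico a b, payoff B v i x y = (b - a) * (v i - x) := by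
  rw [integral_Ico_eq_integral_Ioo, ← integral_Ioc_eq_integral_Ioo,
    setIntegral_payoff_Ioc_of_le B v i hab hbx]

end PayoffIntegral

-- `strongStrategy (v w) L` and `weakStrategy (v s) L` are the paper's `F_s` and `F_w`.
def strongStrategy (a L : ℝ) : Measure ℝ :=
  ENNReal.ofReal (1 / a) • volume.restrict (Ico 0 L) + ENNReal.ofReal (1 - L / a) • Measure.dirac L

def weakStrategy (a L : ℝ) : Measure ℝ :=
  ENNReal.ofReal ((a - L) / a) • Measure.dirac 0 + ENNReal.ofReal (1 / a) • volume.restrict (Ioc 0 L)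

section Strategies

variable {a L : ℝ}

lemma isProbabilityMeasure_strongStrategy (ha : 0 < a) (hL : 0 ≤ L) (hLa : L ≤ a) :
    IsProbabilityMeasure (strongStrategy a L) := by
  constructor
  simp only [strongStrategy, Measure.add_apply, Measure.smul_apply, Measure.restrict_apply_univ,
    Real.volume_Ico, sub_zero, measure_univ, smul_eq_mul, mul_one]
  rw [← ENNReal.ofReal_mul (by positivity), ← ENNReal.ofReal_add (by positivity)
    (sub_nonneg.2 ((div_le_one ha).2 hLa)), one_div_mul_eq_div, add_sub_cancel, ENNReal.ofReal_one]

lemma isProbabilityMeasure_weakStrategy (ha : 0 < a) (hL : 0 ≤ L) (hLa : L ≤ a) :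
    IsProbabilityMeasure (weakStrategy a L) := by
  constructor
  simp only [weakStrategy, Measure.add_apply, Measure.smul_apply, Measure.restrict_apply_univ,
    Real.volume_Ioc, sub_zero, measure_univ, smul_eq_mul, mul_one]
  rw [← ENNReal.ofReal_mul (by positivity), ← ENNReal.ofReal_add (div_nonneg (by linarith) ha.le)
    (by positivity)]
  convert ENNReal.ofReal_one
  field_simp
  ring

lemma ae_strongStrategy : ∀ᵐ x ∂strongStrategy a L, x = L ∨ x ∈ Ioo 0 L := by
  simp only [strongStrategy, ae_add_measure_iff]
  refine ⟨Measure.ae_smul_measure ?_ _, Measure.ae_smul_measure ?_ _⟩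
  · rw [Measure.restrict_congr_set Ioo_ae_eq_Ico.symm]
    exact (ae_restrict_mem measurableSet_Ioo).mono fun _ => Or.inr
  · simp [ae_dirac_eq]

lemma ae_weakStrategy (hL : 0 ≤ L) : ∀ᵐ x ∂weakStrategy a L, x ∈ Icc 0 L := by
  simp only [weakStrategy, ae_add_measure_iff]
  refine ⟨Measure.ae_smul_measure ?_ _, Measure.ae_smul_measure ?_ _⟩
  · simpa [ae_dirac_eq] using hL
  · exact (ae_restrict_mem measurableSet_Ioc).mono fun _ hx => Ioc_subset_Icc_self hx

end Strategies

section Opponent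

variable (B v : Fin 2 → ℝ) (i : Fin 2) {L x : ℝ}

lemma integral_payoff_weakStrategy (hv : 0 < v i) (hL : L ≤ v i) :
    ∫ y, payoff B v i x y ∂weakStrategy (v i) L
      = (v i - L) / v i * payoff B v i x 0 + (∫ y in Ioc 0 L, payoff B v i x y) / v i := by
  rw [weakStrategy, integral_ofReal_smul_add (div_nonneg (sub_nonneg.2 hL) hv.le) (by positivity)
    (integrable_payoff B v i _) (integrable_payoff B v i _), integral_dirac]
  ring

lemma integral_payoff_weakStrategy_of_mem (hv : 0 < v i) (hL : L ≤ v i) (hx : x ∈ Icc 0 L) :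
    ∫ y, payoff B v i x y ∂weakStrategy (v i) L
      = (v i - L) * (payoff B v i x 0 + x) / v i := by
  rw [integral_payoff_weakStrategy B v i hv hL, setIntegral_payoff_Ioc_of_mem B v i hx.1 hx.2]
  ring

lemma integral_payoff_weakStrategy_eq (hv : 0 < v i) (hL : L ≤ v i) (hx : x ∈ Icc 0 L)
    (hwin : payoff B v i x 0 = v i - x) :
    ∫ y, payoff B v i x y ∂weakStrategy (v i) L = v i - L := by
  rw [integral_payoff_weakStrategy_of_mem B v i hv hL hx, hwin, sub_add_cancel,
    mul_div_cancel_right₀ _ hv.ne']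

lemma integral_payoff_weakStrategy_le (hv : 0 < v i) (hL0 : 0 ≤ L) (hL : L ≤ v i) (hx : 0 ≤ x) :
    ∫ y, payoff B v i x y ∂weakStrategy (v i) L ≤ v i - L := by
  rcases le_or_gt x L with hxL | hLx
  · rw [integral_payoff_weakStrategy_of_mem B v i hv hL ⟨hx, hxL⟩, div_le_iff₀ hv]
    have := payoff_le B v i hv.le (x := x) (y := 0)
    nlinarith
  · rw [integral_payoff_weakStrategy B v i hv hL, payoff_of_lt B v i (hL0.trans_lt hLx),
      setIntegral_payoff_Ioc_of_le B v i hL0 hLx.le]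
    field_simp
    nlinarith

lemma integral_payoff_strongStrategy (hv : 0 < v i) (hL : L ≤ v i) :
    ∫ y, payoff B v i x y ∂strongStrategy (v i) L
      = (∫ y in Ico 0 L, payoff B v i x y) / v i + (1 - L / v i) * payoff B v i x L := by
  rw [strongStrategy, integral_ofReal_smul_add (by positivity)
    (sub_nonneg.2 ((div_le_one hv).2 hL)) (integrable_payoff B v i _) (integrable_payoff B v i _),
    integral_dirac]
  ring

lemma integral_payoff_strongStrategy_of_mem (hv : 0 < v i) (hL : L ≤ v i) (hx : x ∈ Icc 0 L)
    (hlose : payoff B v i x L = -x) :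
    ∫ y, payoff B v i x y ∂strongStrategy (v i) L = 0 := by
  rw [integral_payoff_strongStrategy B v i hv hL, setIntegral_payoff_Ico_of_mem B v i hx.1 hx.2,
    hlose]
  field_simp
  ring

lemma integral_payoff_strongStrategy_of_lt (hv : 0 < v i) (hL0 : 0 ≤ L) (hL : L ≤ v i)
    (hLx : L < x) :
    ∫ y, payoff B v i x y ∂strongStrategy (v i) L = v i - x := by
  rw [integral_payoff_strongStrategy B v i hv hL, setIntegral_payoff_Ico_of_le B v i hL0 hLx.le,
    payoff_of_lt B v i hLx]
  field_simp
  ring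

end Opponent

lemma IsStrategy.ae_mem {b : ℝ} {μ : Measure ℝ} (h : IsStrategy b μ) : ∀ᵐ x ∂μ, x ∈ Icc 0 b :=
  have := h.1
  mem_ae_iff.2 ((prob_compl_eq_zero_iff measurableSet_Icc).2 h.2)

lemma isStrategy_of_ae_mem {b L : ℝ} {μ : Measure ℝ} [IsProbabilityMeasure μ]
    (h : ∀ᵐ x ∂μ, x ∈ Icc 0 L) (hLb : L ≤ b) : IsStrategy b μ :=
  ⟨‹_›, (prob_compl_eq_zero_iff measurableSet_Icc).1 <| mem_ae_iff.1 <|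
    h.mono fun _ hx => Icc_subset_Icc_right hLb hx⟩

def IsBestResponse (B v : Fin 2 → ℝ) (i : Fin 2) (F ν : Measure ℝ) : Prop :=
  ∀ μ, IsStrategy (B i) μ → expUtil B v i μ ν ≤ expUtil B v i F ν

lemma isNash_ite (B v : Fin 2 → ℝ) (s : Fin 2) {F G : Measure ℝ} (hF : IsStrategy (B s) F)
    (hG : IsStrategy (B (1 - s)) G) (hFG : IsBestResponse B v s F G)
    (hGF : IsBestResponse B v (1 - s) G F) :
    IsNash B v (fun k => if k = s then F else G) := by
  have hne := fin_two_one_sub_ne s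
  refine ⟨fun i => ?_, fun i => ?_⟩ <;> obtain rfl | rfl := fin_two_eq_or_eq_one_sub i s
  · simpa using hF
  · simpa [hne] using hG
  · simpa [IsBestResponse, hne] using hFG
  · simpa [IsBestResponse, hne, sub_sub_cancel] using hGF

-- `0 ≤ c` handles deviations with a non-integrable payoff, whose expected utility is `0`.
lemma isBestResponse_of_indifferent (B v : Fin 2 → ℝ) (i : Fin 2) {F ν : Measure ℝ}
    [IsProbabilityMeasure F] {c : ℝ} (hc : 0 ≤ c)
    (hle : ∀ x ∈ Icc 0 (B i), ∫ y, payoff B v i x y ∂ν ≤ c)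
    (heq : ∀ᵐ x ∂F, ∫ y, payoff B v i x y ∂ν = c) : IsBestResponse B v i F ν := by
  intro μ hμ
  have := hμ.1
  rw [expUtil, expUtil, integral_congr_ae heq, integral_const, probReal_univ, one_smul]
  by_cases hint : Integrable (fun x => ∫ y, payoff B v i x y ∂ν) μ
  · calc _ ≤ ∫ _, c ∂μ := integral_mono_ae hint (integrable_const c) (hμ.ae_mem.mono hle)
      _ = c := by simp
  · rw [integral_undef hint]
    exact hc

section Equilibrium

variable {B v : Fin 2 → ℝ} {s : Fin 2}

lemma isBestResponse_strongStrategy (hB : ∀ i, 0 ≤ B i) (hv : ∀ i, 0 < v i)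
    (hs : B (1 - s) < B s) (hvs : Lval B v < v s) :
    IsBestResponse B v s (strongStrategy (v (1 - s)) (Lval B v))
      (weakStrategy (v s) (Lval B v)) := by
  have hL0 := Lval_nonneg hB hv
  have := isProbabilityMeasure_strongStrategy (hv _) hL0 (Lval_le_v (1 - s))
  refine isBestResponse_of_indifferent B v s (sub_nonneg.2 hvs.le)
    (fun x hx => integral_payoff_weakStrategy_le B v s (hv s) hL0 hvs.le hx.1) ?_
  filter_upwards [ae_strongStrategy] with x hx
  rcases hx with rfl | hx
  · rcases hL0.eq_or_lt with hL | hL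
    · refine integral_payoff_weakStrategy_eq B v s (hv s) hvs.le ⟨hL0, le_rfl⟩ ?_
      have := payoff_Lval_Lval B v s ((min_eq_Lval hs hvs).trans_lt (Lval_lt_min hs hvs))
      rwa [← hL] at this ⊢
    · exact integral_payoff_weakStrategy_eq B v s (hv s) hvs.le ⟨hL0, le_rfl⟩
        (payoff_of_lt B v s hL)
  · exact integral_payoff_weakStrategy_eq B v s (hv s) hvs.le (Ioo_subset_Icc_self hx)
      (payoff_of_lt B v s hx.1)

lemma isBestResponse_weakStrategy (hB : ∀ i, 0 ≤ B i) (hv : ∀ i, 0 < v i)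
    (hs : B (1 - s) < B s) (hvs : Lval B v < v s) :
    IsBestResponse B v (1 - s) (weakStrategy (v s) (Lval B v))
      (strongStrategy (v (1 - s)) (Lval B v)) := by
  have hL0 := Lval_nonneg hB hv
  have hmin := min_eq_Lval hs hvs
  have hlose : min (B (1 - s)) (v (1 - s)) < min (B (1 - (1 - s))) (v (1 - (1 - s))) := by
    rw [sub_sub_cancel, hmin]
    exact Lval_lt_min hs hvs
  have hvw := Lval_le_v (B := B) (v := v) (1 - s)
  have hmem : ∀ x ∈ Icc 0 (Lval B v), ∫ y, payoff B v (1 - s) x y ∂strongStrategy (v (1 - s))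
      (Lval B v) = 0 := fun x hx =>
    integral_payoff_strongStrategy_of_mem B v _ (hv _) hvw hx (payoff_Lval_eq_neg B v _ hx.2 hlose)
  have := isProbabilityMeasure_weakStrategy (hv s) hL0 hvs.le
  refine isBestResponse_of_indifferent B v (1 - s) le_rfl (fun x hx => ?_)
    ((ae_weakStrategy hL0).mono hmem)
  rcases le_or_gt x (Lval B v) with hxL | hLx
  · exact (hmem x ⟨hx.1, hxL⟩).le
  · rw [integral_payoff_strongStrategy_of_lt B v _ (hv _) hL0 hvw hLx, sub_nonpos]
    rw [← hmin, min_lt_iff] at hLx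
    exact (hLx.resolve_left hx.2.not_gt).le

end Equilibrium

/-- With asymmetric budgets and `v_s > L` (where `s` has the larger budget and
`w = 1 - s`), the profile in which player `s` has cdf `x/v_w` on `[0, L)` with an
atom of mass `1 - L/v_w` at `L`, and player `w` has an atom of mass `(v_s - L)/v_s`
at `0` and cdf `(v_s - L + x)/v_s` on `(0, L]`, is a Nash equilibrium. -/
theorem nash_single_item_case1 (B v : Fin 2 → ℝ) (hB : ∀ i, 0 ≤ B i)
    (hv : ∀ i, 0 < v i) (s : Fin 2) (hs : B (1 - s) < B s)
    (hvs : Lval B v < v s) :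
    IsNash B v (fun k =>
      if k = s then
        ENNReal.ofReal (1 / v (1 - s)) • volume.restrict (Ico (0 : ℝ) (Lval B v)) +
          ENNReal.ofReal (1 - Lval B v / v (1 - s)) • Measure.dirac (Lval B v)
      else
        ENNReal.ofReal ((v s - Lval B v) / v s) • Measure.dirac (0 : ℝ) +
          ENNReal.ofReal (1 / v s) • volume.restrict (Ioc (0 : ℝ) (Lval B v))) := by
  have hL0 := Lval_nonneg hB hv
  have := isProbabilityMeasure_strongStrategy (hv (1 - s)) hL0 (Lval_le_v (1 - s))
  have := isProbabilityMeasure_weakStrategy (hv s) hL0 hvs.le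
  have hstrong : IsStrategy (B s) (strongStrategy (v (1 - s)) (Lval B v)) :=
    isStrategy_of_ae_mem (ae_strongStrategy.mono <| by
      rintro x (rfl | hx); exacts [⟨hL0, le_rfl⟩, Ioo_subset_Icc_self hx]) (Lval_le_B s)
  have hweak : IsStrategy (B (1 - s)) (weakStrategy (v s) (Lval B v)) :=
    isStrategy_of_ae_mem (ae_weakStrategy hL0) (Lval_le_B (1 - s))
  exact isNash_ite B v s hstrong hweak (isBestResponse_strongStrategy hB hv hs hvs)
    (isBestResponse_weakStrategy hB hv hs hvs)
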